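/- arXiv:2208.06267 — 2 statements merged into one kernel-verified Lean document; each statement's English description precedes it below -/
import Mathlib

section
/- Solution of the binary front-door imitation equation: in the surrogate functional model with 𝒳 = 𝒮 = Bool, let q_x := P(gS(gW(x, e_W), u, e_S) = true) for x in Bool (the interventional probability of S = true under do(X = x)) and s := P(S = true). If q_true ≠ q_false and alpha := (s − q_false)/(q_true − q_false) satisfies 0 ≤ alpha ≤ 1, then the policy pi with pi(true) = alpha satisfies P(S' = true) = alpha·q_true + (1 − alpha)·q_false = s, and consequently the law of Y' under do(pi) equals the law of Y. -/
/-!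
Surrogate functional model with `𝒳 = 𝒮 = Bool`: independent noises `u, e_X, e_W, e_S, e_Y`;
`X := gX (u, e_X)`, `W := gW (X, e_W)`, `S := gS (W, u, e_S)`, `Y := gY (S, e_Y)`; `do(π)`
draws `X' ~ π` independently and sets `W' := gW (X', e_W)`, `S' := gS (W', u, e_S)`,
`Y' := gY (S', e_Y)`.
STATEMENT 11: with `q x := P(gS (gW (x, e_W), u, e_S) = true)` and `s := P(S = true)`, if
`q true ≠ q false` and `α := (s − q false) / (q true − q false)` satisfies `0 ≤ α ≤ 1`, then
the policy `π` with `π(true) = α` satisfies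
`P(S' = true) = α · q true + (1 − α) · q false = s`, and consequently the law of `Y'` under
`do(π)` equals the law of `Y`.
-/

open scoped ENNReal

/-- Observational joint law of `(X, W, S, Y)` in the surrogate functional model. -/
noncomputable def srgObs {𝒰 EX EW ES EY 𝒳 𝒲 𝒮 𝒴 : Type}
    (muU : PMF 𝒰) (muEX : PMF EX) (muEW : PMF EW) (muES : PMF ES) (muEY : PMF EY)
    (gX : 𝒰 × EX → 𝒳) (gW : 𝒳 × EW → 𝒲) (gS : 𝒲 × 𝒰 × ES → 𝒮) (gY : 𝒮 × EY → 𝒴) :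
    PMF (𝒳 × 𝒲 × 𝒮 × 𝒴) := do
  let u ← muU
  let ex ← muEX
  let ew ← muEW
  let es ← muES
  let ey ← muEY
  let x := gX (u, ex)
  let w := gW (x, ew)
  let s := gS (w, u, es)
  pure (x, w, s, gY (s, ey))

/-- Intervened joint law of `(X', W', S', Y')` under `do(π)` in the surrogate model. -/
noncomputable def srgInterv {𝒰 EW ES EY 𝒳 𝒲 𝒮 𝒴 : Type}
    (muU : PMF 𝒰) (muEW : PMF EW) (muES : PMF ES) (muEY : PMF EY)
    (gW : 𝒳 × EW → 𝒲) (gS : 𝒲 × 𝒰 × ES → 𝒮) (gY : 𝒮 × EY → 𝒴) (π : PMF 𝒳) :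
    PMF (𝒳 × 𝒲 × 𝒮 × 𝒴) := do
  let x' ← π
  let u ← muU
  let ew ← muEW
  let es ← muES
  let ey ← muEY
  let w' := gW (x', ew)
  let s' := gS (w', u, es)
  pure (x', w', s', gY (s', ey))

/-- Interventional law of the surrogate `S` under the atomic intervention `do(X = x)`:
law of `gS (gW (x, e_W), u, e_S)`. -/
noncomputable def srgAtomS {𝒰 EW ES 𝒳 𝒲 𝒮 : Type}
    (muU : PMF 𝒰) (muEW : PMF EW) (muES : PMF ES)
    (gW : 𝒳 × EW → 𝒲) (gS : 𝒲 × 𝒰 × ES → 𝒮) (x : 𝒳) : PMF 𝒮 := do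
  let u ← muU
  let ew ← muEW
  let es ← muES
  pure (gS (gW (x, ew), u, es))

lemma pmf_fmap_aux {α β : Type} (f : α → β) (p : PMF α) :
    (f <$> p) = p.bind (fun a => PMF.pure (f a)) := rfl

lemma pmf_bind_aux {α β : Type} (p : PMF α) (f : α → PMF β) : p >>= f = p.bind f := rfl

lemma pmf_pure_aux {α : Type} (a : α) : (pure a : PMF α) = PMF.pure a := rfl

lemma aux_interv_S {𝒰 EW ES EY 𝒳 𝒲 𝒮 𝒴 : Type}
    (muU : PMF 𝒰) (muEW : PMF EW) (muES : PMF ES) (muEY : PMF EY)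
    (gW : 𝒳 × EW → 𝒲) (gS : 𝒲 × 𝒰 × ES → 𝒮) (gY : 𝒮 × EY → 𝒴) (π : PMF 𝒳) :
    (srgInterv muU muEW muES muEY gW gS gY π).map (fun v => v.2.2.1)
      = π.bind (srgAtomS muU muEW muES gW gS) := by
  have : srgAtomS muU muEW muES gW gS = fun x =>
      muU.bind fun u => muEW.bind fun ew => muES.bind fun es =>
        PMF.pure (gS (gW (x, ew), u, es)) := by
    funext x
    simp [srgAtomS, pmf_bind_aux, pmf_pure_aux]
  rw [this]
  simp [srgInterv, PMF.map, pmf_fmap_aux, pmf_bind_aux, pmf_pure_aux, PMF.bind_bind,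
    PMF.pure_bind, PMF.bind_const, Function.comp_def]

lemma aux_interv_Y {𝒰 EW ES EY 𝒳 𝒲 𝒮 𝒴 : Type}
    (muU : PMF 𝒰) (muEW : PMF EW) (muES : PMF ES) (muEY : PMF EY)
    (gW : 𝒳 × EW → 𝒲) (gS : 𝒲 × 𝒰 × ES → 𝒮) (gY : 𝒮 × EY → 𝒴) (π : PMF 𝒳) :
    (srgInterv muU muEW muES muEY gW gS gY π).map (fun v => v.2.2.2)
      = ((srgInterv muU muEW muES muEY gW gS gY π).map (fun v => v.2.2.1)).bind
          (fun b => muEY.map (fun ey => gY (b, ey))) := by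
  simp [srgInterv, PMF.map, pmf_fmap_aux, pmf_bind_aux, pmf_pure_aux, PMF.bind_bind,
    PMF.pure_bind, PMF.bind_const, Function.comp_def]

lemma aux_obs_Y {𝒰 EX EW ES EY 𝒳 𝒲 𝒮 𝒴 : Type}
    (muU : PMF 𝒰) (muEX : PMF EX) (muEW : PMF EW) (muES : PMF ES) (muEY : PMF EY)
    (gX : 𝒰 × EX → 𝒳) (gW : 𝒳 × EW → 𝒲) (gS : 𝒲 × 𝒰 × ES → 𝒮) (gY : 𝒮 × EY → 𝒴) :
    (srgObs muU muEX muEW muES muEY gX gW gS gY).map (fun v => v.2.2.2)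
      = ((srgObs muU muEX muEW muES muEY gX gW gS gY).map (fun v => v.2.2.1)).bind
          (fun b => muEY.map (fun ey => gY (b, ey))) := by
  simp [srgObs, PMF.map, pmf_fmap_aux, pmf_bind_aux, pmf_pure_aux, PMF.bind_bind,
    PMF.pure_bind, PMF.bind_const, Function.comp_def]

lemma aux_bool_pmf_ext (p q : PMF Bool) (h : p true = q true) : p = q := by
  have hp : p false + p true = 1 := by rw [← tsum_bool]; exact p.tsum_coe
  have hq : q false + q true = 1 := by rw [← tsum_bool]; exact q.tsum_coe
  ext b
  cases b
  · rw [h] at hp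
    exact (ENNReal.add_left_inj (q.apply_ne_top true)).mp (hp.trans hq.symm)
  · exact h

theorem binary_frontdoor_imitation_solution
    {𝒰 EX EW ES EY 𝒲 𝒴 : Type}
    [Fintype 𝒰] [Nonempty 𝒰] [Fintype EX] [Nonempty EX] [Fintype EW] [Nonempty EW]
    [Fintype ES] [Nonempty ES] [Fintype EY] [Nonempty EY]
    [Fintype 𝒲] [Nonempty 𝒲] [Fintype 𝒴] [Nonempty 𝒴]
    (muU : PMF 𝒰) (muEX : PMF EX) (muEW : PMF EW) (muES : PMF ES) (muEY : PMF EY)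
    (gX : 𝒰 × EX → Bool) (gW : Bool × EW → 𝒲) (gS : 𝒲 × 𝒰 × ES → Bool)
    (gY : Bool × EY → 𝒴)
    (q : Bool → ℝ≥0∞)
    (hq : ∀ x : Bool, q x = srgAtomS muU muEW muES gW gS x true)
    (s : ℝ≥0∞)
    (hs : s = (srgObs muU muEX muEW muES muEY gX gW gS gY).map (fun v => v.2.2.1) true)
    (hne : q true ≠ q false)
    (α : ℝ)
    (hα : α = (s.toReal - (q false).toReal) / ((q true).toReal - (q false).toReal))
    (h0 : 0 ≤ α) (h1 : α ≤ 1) :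
    (((srgInterv muU muEW muES muEY gW gS gY
        (PMF.bernoulli (Real.toNNReal α) (Real.toNNReal_le_one.mpr h1))).map
          (fun v => v.2.2.1)) true).toReal
      = α * (q true).toReal + (1 - α) * (q false).toReal ∧
    ((srgInterv muU muEW muES muEY gW gS gY
        (PMF.bernoulli (Real.toNNReal α) (Real.toNNReal_le_one.mpr h1))).map
          (fun v => v.2.2.1)) true = s ∧
    (srgInterv muU muEW muES muEY gW gS gY
        (PMF.bernoulli (Real.toNNReal α) (Real.toNNReal_le_one.mpr h1))).map
          (fun v => v.2.2.2)
      = (srgObs muU muEX muEW muES muEY gX gW gS gY).map (fun v => v.2.2.2) := by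
  set π : PMF Bool := PMF.bernoulli (Real.toNNReal α) (Real.toNNReal_le_one.mpr h1) with hπ
  -- basic finiteness facts
  have hqT_ne : q true ≠ ⊤ := by
    rw [hq true]; exact PMF.apply_ne_top _ _
  have hqF_ne : q false ≠ ⊤ := by
    rw [hq false]; exact PMF.apply_ne_top _ _
  have hofα : ENNReal.ofReal α ≤ 1 := ENNReal.ofReal_le_one.mpr h1
  have hsub_ne : (1 : ℝ≥0∞) - ENNReal.ofReal α ≠ ⊤ := by
    exact ne_top_of_le_ne_top ENNReal.one_ne_top tsub_le_self
  -- value of the intervened S marginal at `true`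
  have hSt : ((srgInterv muU muEW muES muEY gW gS gY π).map (fun v => v.2.2.1)) true
      = (1 - ENNReal.ofReal α) * q false + ENNReal.ofReal α * q true := by
    rw [aux_interv_S, PMF.bind_apply, tsum_bool, hq true, hq false, hπ]
    simp [PMF.bernoulli_apply, ENNReal.ofReal]
  -- toReal of that value
  have htoReal : (((srgInterv muU muEW muES muEY gW gS gY π).map (fun v => v.2.2.1)) true).toReal
      = (1 - α) * (q false).toReal + α * (q true).toReal := by
    rw [hSt, ENNReal.toReal_add (ENNReal.mul_ne_top hsub_ne hqF_ne)
        (ENNReal.mul_ne_top ENNReal.ofReal_ne_top hqT_ne),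
      ENNReal.toReal_mul, ENNReal.toReal_mul,
      ENNReal.toReal_sub_of_le hofα ENNReal.one_ne_top,
      ENNReal.toReal_ofReal h0, ENNReal.toReal_one]
  -- the real identity
  have hdne : (q true).toReal ≠ (q false).toReal := by
    intro h
    exact hne ((ENNReal.toReal_eq_toReal_iff' hqT_ne hqF_ne).mp h)
  have hreal : (1 - α) * (q false).toReal + α * (q true).toReal = s.toReal := by
    have hd : (q true).toReal - (q false).toReal ≠ 0 := sub_ne_zero.mpr hdne
    have : α * ((q true).toReal - (q false).toReal) = s.toReal - (q false).toReal := by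
      rw [hα, div_mul_cancel₀ _ hd]
    nlinarith [this]
  have part1 : (((srgInterv muU muEW muES muEY gW gS gY π).map (fun v => v.2.2.1)) true).toReal
      = α * (q true).toReal + (1 - α) * (q false).toReal := by
    rw [htoReal]; ring
  -- equality in ℝ≥0∞
  have hs_ne : s ≠ ⊤ := by rw [hs]; exact PMF.apply_ne_top _ _
  have hmarg_ne : ((srgInterv muU muEW muES muEY gW gS gY π).map (fun v => v.2.2.1)) true ≠ ⊤ :=
    PMF.apply_ne_top _ _
  have part2 : ((srgInterv muU muEW muES muEY gW gS gY π).map (fun v => v.2.2.1)) true = s := by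
    refine (ENNReal.toReal_eq_toReal_iff' hmarg_ne hs_ne).mp ?_
    rw [htoReal, hreal]
  refine ⟨part1, part2, ?_⟩
  have hSlaw : (srgInterv muU muEW muES muEY gW gS gY π).map (fun v => v.2.2.1)
      = (srgObs muU muEX muEW muES muEY gX gW gS gY).map (fun v => v.2.2.1) :=
    aux_bool_pmf_ext _ _ (by rw [part2, hs])
  rw [aux_interv_Y, aux_obs_Y, hSlaw]
end

section
/- In the adversarial highway model, behavior cloning conditioned on W underperforms: let pi2(w) be the conditional law of X given W = w, draw X'' from pi2(W) conditionally on (L, U) (so that X'' depends on (L, U) only through W), and set Y2 := X'' XOR U; then P(Y2 = true) = 7 − 3·sqrt(5). -/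
/-!
Adversarial highway model: `p := (√5 − 1)/2`; `L` and `U` independent Bool-valued with
`P(L = true) = P(U = true) = p`; `W := L AND U`, `X := L`, `Y := X XOR U`.
STATEMENT 14: let `π₂(w)` be the conditional law of `X` given `W = w` (well-defined, since
`P(W = w) > 0`), draw `X''` from `π₂(W)` conditionally on `(L, U)` — so `X''` depends on
`(L, U)` only through `W` — and set `Y2 := X'' XOR U`; then `P(Y2 = true) = 7 − 3·√5`.
-/

open scoped ENNReal

/-- `p := (√5 − 1)/2` as an extended nonnegative real. -/
noncomputable def pAdv : ℝ≥0∞ := ENNReal.ofReal ((Real.sqrt 5 - 1) / 2)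

lemma pAdv_le_one : pAdv ≤ 1 := by
  rw [pAdv, ENNReal.ofReal_le_one]
  nlinarith [Real.sq_sqrt (show (0:ℝ) ≤ 5 by norm_num), Real.sqrt_nonneg 5]

/-- Joint law of `(L, U)`: independent Bernoulli(`p`) bits. -/
noncomputable def advBase : PMF (Bool × Bool) := do
  let l ← PMF.bernoulli pAdv.toNNReal
    (by simpa using ENNReal.toNNReal_mono ENNReal.one_ne_top pAdv_le_one)
  let u ← PMF.bernoulli pAdv.toNNReal
    (by simpa using ENNReal.toNNReal_mono ENNReal.one_ne_top pAdv_le_one)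
  pure (l, u)

/-- Marginal law of `W := L AND U`. -/
noncomputable def advW : PMF Bool := advBase.map fun lu => lu.1 && lu.2

/-- Joint law of `(X, W)` with `X := L` and `W := L AND U`. -/
noncomputable def advXW : PMF (Bool × Bool) := advBase.map fun lu => (lu.1, lu.1 && lu.2)

/-- Law of `Y2 := X'' XOR U` where `X'' ~ π₂(W)` is drawn conditionally independently of
`(L, U)` given `W`. -/
noncomputable def advY2 (π₂ : Bool → PMF Bool) : PMF Bool :=
  advBase.bind fun lu => (π₂ (lu.1 && lu.2)).map fun x'' => xor x'' lu.2

lemma advBase_apply (lu : Bool × Bool) :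
    advBase lu = (cond lu.1 pAdv (1-pAdv)) * (cond lu.2 pAdv (1-pAdv)) := by
  obtain ⟨l,u⟩ := lu
  cases l <;> cases u <;>
  simp [advBase, PMF.bernoulli, PMF.bind_apply, PMF.map_apply, Functor.map, Bind.bind, Pure.pure,
    PMF.ofFintype_apply, tsum_bool, ENNReal.coe_toNNReal (ne_top_of_le_ne_top ENNReal.one_ne_top pAdv_le_one)]

lemma advW_false : advW false = (1-pAdv)*(1-pAdv) + (1-pAdv)*pAdv + pAdv*(1-pAdv) := by
  simp [advW, PMF.map_apply, ENNReal.tsum_prod', tsum_bool, advBase_apply, Fintype.sum_prod_type, Fintype.sum_bool]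
  ring

lemma advXW_ff : advXW (false,false) = (1-pAdv)*(1-pAdv) + (1-pAdv)*pAdv := by
  simp [advXW, PMF.map_apply, ENNReal.tsum_prod', tsum_bool, advBase_apply, Fintype.sum_prod_type, Fintype.sum_bool]
  ring

lemma advXW_tf : advXW (true,false) = pAdv*(1-pAdv) := by
  simp [advXW, PMF.map_apply, ENNReal.tsum_prod', tsum_bool, advBase_apply, Fintype.sum_prod_type, Fintype.sum_bool]

lemma advXW_ft : advXW (false,true) = 0 := by
  simp [advXW, PMF.map_apply, ENNReal.tsum_prod', tsum_bool, advBase_apply, Fintype.sum_prod_type, Fintype.sum_bool]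

lemma advY2_true (π₂ : Bool → PMF Bool) : advY2 π₂ true =
    (1-pAdv)*(1-pAdv) * (π₂ false true) + (1-pAdv)*pAdv * (π₂ false false)
    + pAdv*(1-pAdv) * (π₂ false true) + pAdv*pAdv * (π₂ true false) := by
  simp [advY2, PMF.bind_apply, PMF.map_apply, ENNReal.tsum_prod', tsum_bool, advBase_apply, Fintype.sum_prod_type, Fintype.sum_bool]
  ring

theorem adv_conditional_cloning_reward
    (π₂ : Bool → PMF Bool)
    (hπ₂ : ∀ w x : Bool, π₂ w x = advXW (x, w) / advW w) :
    advY2 π₂ true = ENNReal.ofReal (7 - 3 * Real.sqrt 5) := by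
  set r : ℝ := (Real.sqrt 5 - 1) / 2 with hr
  have hs5 : Real.sqrt 5 ^ 2 = 5 := Real.sq_sqrt (by norm_num)
  have hs2 : (2:ℝ) ≤ Real.sqrt 5 := by nlinarith [Real.sqrt_nonneg 5]
  have hs3 : Real.sqrt 5 ≤ 3 := by nlinarith [Real.sqrt_nonneg 5]
  have hr0 : (0:ℝ) ≤ r := by rw [hr]; linarith
  have hr1 : r ≤ 1 := by rw [hr]; linarith
  have hq0 : (0:ℝ) ≤ 1 - r := by linarith
  have hp : pAdv = ENNReal.ofReal r := rfl
  have hq : (1:ℝ≥0∞) - pAdv = ENNReal.ofReal (1-r) := by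
    rw [hp, ← ENNReal.ofReal_one, ← ENNReal.ofReal_sub _ hr0]
  set D : ℝ := (1-r)*(1-r) + (1-r)*r + r*(1-r) with hD
  have hDpos : 0 < D := by rw [hD, hr]; nlinarith
  have hWf : advW false = ENNReal.ofReal D := by
    rw [advW_false, hq, hp, ← ENNReal.ofReal_mul hq0, ← ENNReal.ofReal_mul hq0,
      ← ENNReal.ofReal_mul hr0, ← ENNReal.ofReal_add (by positivity) (by positivity),
      ← ENNReal.ofReal_add (by positivity) (by positivity)]
  have hft : π₂ false true = ENNReal.ofReal (r*(1-r)/D) := by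
    rw [hπ₂, advXW_tf, hWf, hq, hp, ← ENNReal.ofReal_mul hr0,
      ENNReal.ofReal_div_of_pos hDpos]
  have hff : π₂ false false = ENNReal.ofReal (((1-r)*(1-r) + (1-r)*r)/D) := by
    rw [hπ₂, advXW_ff, hWf, hq, hp, ← ENNReal.ofReal_mul hq0, ← ENNReal.ofReal_mul hq0,
      ← ENNReal.ofReal_add (by positivity) (by positivity),
      ENNReal.ofReal_div_of_pos hDpos]
  have htf : π₂ true false = 0 := by
    rw [hπ₂, advXW_ft, ENNReal.zero_div]
  rw [advY2_true, hft, hff, htf, hq, hp, mul_zero, add_zero,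
    ← ENNReal.ofReal_mul hq0, ← ENNReal.ofReal_mul hq0, ← ENNReal.ofReal_mul hr0,
    ← ENNReal.ofReal_mul (by positivity), ← ENNReal.ofReal_mul (by positivity),
    ← ENNReal.ofReal_mul (by positivity),
    ← ENNReal.ofReal_add (by positivity) (by positivity),
    ← ENNReal.ofReal_add (by positivity) (by positivity)]
  congr 1
  field_simp
  rw [hr]
  ring_nf
  nlinarith [hs5, hs2, hs3]
end
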